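/- Let G be a simple graph of Class 2 with a critical edge e1 = y0 y1, let φ ∈ C^Δ(G − e1), and let K = (y0, e1, y1, e2, y2, e3, y3) be a Kierstead path with respect to e1 and φ. If min{d_G(y1), d_G(y2)} < Δ, then the vertex set {y0, y1, y2, y3} is φ-elementary. -/

import Mathlib

/-- A proper `k`-edge-coloring of `G` with colors from `{1, …, k}`: every edge of `G`
receives a color in `{1, …, k}` and distinct edges sharing a vertex get distinct colors. -/
def IsProperEdgeColoring {V : Type*} (G : SimpleGraph V) (k : ℕ) (φ : Sym2 V → ℕ) : Prop :=
  (∀ e ∈ G.edgeSet, φ e ∈ Finset.Icc 1 k) ∧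
    ∀ e₁ ∈ G.edgeSet, ∀ e₂ ∈ G.edgeSet, e₁ ≠ e₂ → (∃ v, v ∈ e₁ ∧ v ∈ e₂) → φ e₁ ≠ φ e₂

/-- The chromatic index `χ'(G)`: the least `k` such that `G` has a proper `k`-edge-coloring. -/
noncomputable def chromIndex {V : Type*} (G : SimpleGraph V) : ℕ :=
  sInf {k | ∃ φ : Sym2 V → ℕ, IsProperEdgeColoring G k φ}

/-- The set `φ̄(u)` of colors of `{1, …, k}` missing at `u`, i.e. not used by `φ` on
any edge of `G` incident with `u`. -/
def missing {V : Type*} (G : SimpleGraph V) (k : ℕ) (φ : Sym2 V → ℕ) (u : V) : Set ℕ :=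
  {c | c ∈ Finset.Icc 1 k ∧ ∀ v, G.Adj u v → φ s(u, v) ≠ c}

/-!
Every case ends in the same contradiction: since `G` is Class 2, no `Δ`-edge-coloring of
`G - y₀y₁` has a color missing at both `y₀` and `y₁`, for it would extend to `G`. A color
missing at two other vertices of the path is pushed towards that situation by recoloring a path
edge with it, by moving the uncolored edge from `y₀y₁` to `y₁y₂` (which makes `(y₁, y₂, y₃)` a
Kierstead path), or by a Kempe swap. Kempe chains are paths or cycles, so a chain starting at a
vertex missing one of its two colors reaches at most one other such vertex and can be swapped
without disturbing the third. The degree condition supplies a second missing color at `y₁`, or a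
missing color at `y₂`, for the last of these swaps.
-/

namespace IsProperEdgeColoring

variable {V : Type*} {Γ Γ' : SimpleGraph V} {k : ℕ} {ψ : Sym2 V → ℕ}

theorem of_adj (hmem : ∀ u v, Γ.Adj u v → ψ s(u, v) ∈ Finset.Icc 1 k)
    (hne : ∀ w x y, Γ.Adj w x → Γ.Adj w y → x ≠ y → ψ s(w, x) ≠ ψ s(w, y)) :
    IsProperEdgeColoring Γ k ψ := by
  refine ⟨fun e he => ?_, fun e he f hf hef ⟨w, hwe, hwf⟩ => ?_⟩
  · induction e using Sym2.ind with
    | _ u v => exact hmem u v he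
  · obtain ⟨x, rfl⟩ := Sym2.mem_iff_exists.1 hwe
    obtain ⟨y, rfl⟩ := Sym2.mem_iff_exists.1 hwf
    exact hne w x y he hf (fun hxy => hef (hxy ▸ rfl))

theorem apply_ne (hψ : IsProperEdgeColoring Γ k ψ) {w x y : V} (hx : Γ.Adj w x) (hy : Γ.Adj w y)
    (hxy : x ≠ y) : ψ s(w, x) ≠ ψ s(w, y) :=
  hψ.2 _ hx _ hy (fun h => hxy (Sym2.congr_right.1 h))
    ⟨w, Sym2.mem_mk_left _ _, Sym2.mem_mk_left _ _⟩

theorem mono (hψ : IsProperEdgeColoring Γ k ψ) (h : Γ' ≤ Γ) : IsProperEdgeColoring Γ' k ψ :=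
  ⟨fun e he => hψ.1 e (SimpleGraph.edgeSet_mono h he),
    fun e he f hf => hψ.2 e (SimpleGraph.edgeSet_mono h he) f (SimpleGraph.edgeSet_mono h hf)⟩

end IsProperEdgeColoring

section Missing

variable {V : Type*} {Γ Γ' : SimpleGraph V} {k : ℕ} {ψ ψ' : Sym2 V → ℕ} {u v : V} {c : ℕ}

theorem apply_notMem_missing (huv : Γ.Adj u v) : ψ s(u, v) ∉ missing Γ k ψ u :=
  fun h => h.2 v huv rfl

theorem apply_notMem_missing_right (huv : Γ.Adj u v) : ψ s(u, v) ∉ missing Γ k ψ v :=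
  Sym2.eq_swap (a := u) ▸ apply_notMem_missing huv.symm

theorem missing_subset_of_le (h : Γ' ≤ Γ) : missing Γ k ψ u ⊆ missing Γ' k ψ u :=
  fun _ hc => ⟨hc.1, fun x hx => hc.2 x (h hx)⟩

theorem missing_congr (hadj : ∀ x, Γ'.Adj u x ↔ Γ.Adj u x)
    (hcol : ∀ x, Γ.Adj u x → ψ' s(u, x) = ψ s(u, x)) : missing Γ' k ψ' u = missing Γ k ψ u := by
  ext c
  refine and_congr_right fun _ => forall_congr' fun x => ?_
  rw [hadj x]
  exact imp_congr_right fun hx => by rw [hcol x hx]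

theorem perm_mem_missing_iff (σ : Equiv.Perm ℕ)
    (hσ : ∀ c, σ c ∈ Finset.Icc 1 k ↔ c ∈ Finset.Icc 1 k)
    (hcol : ∀ x, Γ.Adj u x → ψ' s(u, x) = σ (ψ s(u, x))) :
    σ c ∈ missing Γ k ψ' u ↔ c ∈ missing Γ k ψ u :=
  and_congr (hσ c) <| forall_congr' fun x => imp_congr_right fun hx => by
    rw [hcol x hx, σ.injective.ne_iff]

theorem missing_deleteEdges_of_notMem {e : Sym2 V} (hu : u ∉ e) :
    missing (Γ.deleteEdges {e}) k ψ u = missing Γ k ψ u :=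
  missing_congr (fun x => by
    rw [SimpleGraph.deleteEdges_adj, Set.mem_singleton_iff, and_iff_left_iff_imp]
    rintro - rfl
    exact hu (Sym2.mem_mk_left _ _)) fun _ _ => rfl

theorem apply_mem_missing_deleteEdges (hψ : IsProperEdgeColoring Γ k ψ) (huv : Γ.Adj u v) :
    ψ s(u, v) ∈ missing (Γ.deleteEdges {s(u, v)}) k ψ u := by
  refine ⟨hψ.1 _ huv, fun x hx => hψ.apply_ne ?_ huv ?_⟩
  · exact (SimpleGraph.deleteEdges_le _) hx
  · rintro rfl
    exact (SimpleGraph.deleteEdges_adj.1 hx).2 rfl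

theorem exists_mem_missing_notMem {s : Finset V} (hs : ∀ x, Γ.Adj u x → x ∈ s) (T : Finset ℕ)
    (h : s.card + T.card < k) : ∃ c ∈ missing Γ k ψ u, c ∉ T := by
  classical
  have hcard : (T ∪ s.image fun x => ψ s(u, x)).card < (Finset.Icc 1 k).card := by
    calc (T ∪ s.image fun x => ψ s(u, x)).card ≤ T.card + s.card :=
          (Finset.card_union_le _ _).trans (Nat.add_le_add_left Finset.card_image_le _)
      _ < (Finset.Icc 1 k).card := by rw [Nat.card_Icc]; omega
  obtain ⟨c, hc, hcT⟩ := Finset.exists_mem_notMem_of_card_lt_card hcard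
  rw [Finset.mem_union, not_or, Finset.mem_image, not_exists] at hcT
  exact ⟨c, ⟨hc, fun x hx hxc => hcT.2 x ⟨hs x hx, hxc⟩⟩, hcT.1⟩

end Missing

section MissingExists

variable {V : Type*} [Fintype V] {G : SimpleGraph V} [DecidableRel G.Adj] {k : ℕ}
  {ψ : Sym2 V → ℕ}

theorem exists_mem_missing_of_degree_lt {Γ : SimpleGraph V} (hΓ : Γ ≤ G) {u : V}
    (h : G.degree u < k) : ∃ c, c ∈ missing Γ k ψ u := by
  obtain ⟨c, hc, -⟩ := exists_mem_missing_notMem (ψ := ψ) (s := G.neighborFinset u)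
    (fun x hx => (G.mem_neighborFinset u x).2 (hΓ hx)) ∅ (by simpa using h)
  exact ⟨c, hc⟩

theorem exists_mem_missing_deleteEdges_notMem {u v : V} (huv : G.Adj u v) (T : Finset ℕ)
    (h : G.degree v + T.card ≤ k) :
    ∃ c ∈ missing (G.deleteEdges {s(u, v)}) k ψ v, c ∉ T := by
  classical
  have hu : u ∈ G.neighborFinset v := (G.mem_neighborFinset v u).2 huv.symm
  refine exists_mem_missing_notMem (s := (G.neighborFinset v).erase u) (fun x hx => ?_) T ?_
  · rw [SimpleGraph.deleteEdges_adj, Set.mem_singleton_iff] at hx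
    refine Finset.mem_erase.2 ⟨?_, (G.mem_neighborFinset v x).2 hx.1⟩
    rintro rfl
    exact hx.2 Sym2.eq_swap
  · rw [Finset.card_erase_of_mem hu, G.card_neighborFinset_eq_degree]
    have := Finset.card_pos.2 ⟨u, hu⟩
    rw [G.card_neighborFinset_eq_degree] at this
    omega

end MissingExists

section Update

variable {V : Type*} [DecidableEq V] {Γ : SimpleGraph V} {k : ℕ} {ψ : Sym2 V → ℕ} {u v : V}
  {α c : ℕ}

theorem mem_missing_update {e : Sym2 V} (hc : c ∈ missing (Γ.deleteEdges {e}) k ψ u)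
    (hcα : c ≠ α) : c ∈ missing Γ k (Function.update ψ e α) u := by
  refine ⟨hc.1, fun x hx => ?_⟩
  by_cases hxe : s(u, x) = e
  · rw [hxe, Function.update_self]
    exact hcα.symm
  · rw [Function.update_of_ne hxe]
    exact hc.2 x (SimpleGraph.deleteEdges_adj.2 ⟨hx, hxe⟩)

theorem missing_update_of_notMem {e : Sym2 V} (hu : u ∉ e) :
    missing Γ k (Function.update ψ e α) u = missing Γ k ψ u :=
  missing_congr (fun _ => Iff.rfl) fun x _ =>
    Function.update_of_ne (fun h : s(u, x) = e => hu (h ▸ Sym2.mem_mk_left _ _)) _ _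

theorem IsProperEdgeColoring.update (hψ : IsProperEdgeColoring (Γ.deleteEdges {s(u, v)}) k ψ)
    (huv : Γ.Adj u v) (hu : α ∈ missing (Γ.deleteEdges {s(u, v)}) k ψ u)
    (hv : α ∈ missing (Γ.deleteEdges {s(u, v)}) k ψ v) :
    IsProperEdgeColoring Γ k (Function.update ψ s(u, v) α) := by
  have hdel : ∀ {w x}, Γ.Adj w x → s(w, x) ≠ s(u, v) → (Γ.deleteEdges {s(u, v)}).Adj w x :=
    fun h hne => SimpleGraph.deleteEdges_adj.2 ⟨h, hne⟩
  have hα : ∀ {w x}, w ∈ s(u, v) → Γ.Adj w x → s(w, x) ≠ s(u, v) → ψ s(w, x) ≠ α := by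
    intro w x hw hx hne
    rcases Sym2.mem_iff.1 hw with rfl | rfl
    · exact hu.2 x (hdel hx hne)
    · exact hv.2 x (hdel hx hne)
  refine .of_adj (fun x y hxy => ?_) (fun w x y hx hy hxy => ?_)
  · by_cases h : s(x, y) = s(u, v)
    · rw [h, Function.update_self]
      exact hu.1
    · rw [Function.update_of_ne h]
      exact hψ.1 _ (hdel hxy h)
  · have hmem : ∀ {x}, s(w, x) = s(u, v) → w ∈ s(u, v) := fun h => h ▸ Sym2.mem_mk_left _ _
    by_cases hx' : s(w, x) = s(u, v) <;> by_cases hy' : s(w, y) = s(u, v)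
    · exact absurd (Sym2.congr_right.1 (hx'.trans hy'.symm)) hxy
    · rw [hx', Function.update_self, Function.update_of_ne hy']
      exact (hα (hmem hx') hy hy').symm
    · rw [hy', Function.update_self, Function.update_of_ne hx']
      exact hα (hmem hy') hx hx'
    · rw [Function.update_of_ne hx', Function.update_of_ne hy']
      exact hψ.apply_ne (hdel hx hx') (hdel hy hy') hxy

theorem IsProperEdgeColoring.recolor (hψ : IsProperEdgeColoring Γ k ψ) (huv : Γ.Adj u v)
    (hu : α ∈ missing Γ k ψ u) (hv : α ∈ missing Γ k ψ v) :
    IsProperEdgeColoring Γ k (Function.update ψ s(u, v) α) :=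
  (hψ.mono (SimpleGraph.deleteEdges_le _)).update huv
    (missing_subset_of_le (SimpleGraph.deleteEdges_le _) hu)
    (missing_subset_of_le (SimpleGraph.deleteEdges_le _) hv)

end Update

theorem disjoint_missing_of_lt_chromIndex {V : Type*} {G : SimpleGraph V} {k : ℕ}
    (hk : k < chromIndex G) {x y : V} (hxy : G.Adj x y) {ζ : Sym2 V → ℕ}
    (hζ : IsProperEdgeColoring (G.deleteEdges {s(x, y)}) k ζ) :
    Disjoint (missing (G.deleteEdges {s(x, y)}) k ζ x)
      (missing (G.deleteEdges {s(x, y)}) k ζ y) := by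
  classical
  exact Set.disjoint_left.2 fun _ hx hy => hk.not_ge (Nat.sInf_le ⟨_, hζ.update hxy hx hy⟩)

namespace SimpleGraph

variable {V : Type*} {H : SimpleGraph V}

theorem Walk.IsPath.eq_of_subsingleton_neighborSet
    (hdeg : ∀ u y, H.Adj u y → (H.neighborSet u \ {y}).Subsingleton) {x y b c : V}
    (hxy : H.Adj x y) {p : H.Walk x b} (hp : p.IsPath) (hyp : y ∉ p.support)
    (hb : (H.neighborSet b).Subsingleton) {q : H.Walk x c} (hq : q.IsPath)
    (hyq : y ∉ q.support) (hc : (H.neighborSet c).Subsingleton) : b = c := by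
  induction p generalizing y with
  | nil =>
    cases q with
    | nil => rfl
    | cons h q => exact absurd (by simp [hb hxy h]) hyq
  | @cons _ x1 _ h p ih =>
    cases q with
    | nil => exact absurd (by simp [hc hxy h]) hyp
    | @cons _ x2 _ h' q =>
      have hy1 : x1 ≠ y := by rintro rfl; simp at hyp
      have hy2 : x2 ≠ y := by rintro rfl; simp at hyq
      obtain rfl := hdeg _ y hxy ⟨h, hy1⟩ ⟨h', hy2⟩
      rw [Walk.cons_isPath_iff] at hp hq
      exact ih h.symm hp.1 hp.2 hb hq.1 hq.2

theorem not_reachable_of_reachable_of_subsingleton_neighborSet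
    (hdeg : ∀ u y, H.Adj u y → (H.neighborSet u \ {y}).Subsingleton) {u v w : V}
    (huv : u ≠ v) (huw : u ≠ w) (hvw : v ≠ w) (hu : (H.neighborSet u).Subsingleton)
    (hv : (H.neighborSet v).Subsingleton) (hw : (H.neighborSet w).Subsingleton)
    (h : H.Reachable u v) : ¬H.Reachable u w := by
  intro h'
  obtain ⟨p, hp⟩ := h.exists_isPath
  obtain ⟨q, hq⟩ := h'.exists_isPath
  cases p with
  | nil => exact huv rfl
  | cons hx p =>
    cases q with
    | nil => exact huw rfl
    | cons hy q =>
      obtain rfl := hu hx hy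
      rw [Walk.cons_isPath_iff] at hp hq
      exact hvw (hp.1.eq_of_subsingleton_neighborSet hdeg hx.symm hp.2 hv hq.1 hq.2 hw)

end SimpleGraph

section Kempe

variable {V : Type*} {Γ : SimpleGraph V} {k : ℕ} {ψ : Sym2 V → ℕ} {a b c : ℕ} {z u v w x : V}

def kempeGraph (Γ : SimpleGraph V) (ψ : Sym2 V → ℕ) (a b : ℕ) : SimpleGraph V where
  Adj u v := Γ.Adj u v ∧ ψ s(u, v) ∈ ({a, b} : Set ℕ)
  symm := ⟨fun u _ h => ⟨h.1.symm, Sym2.eq_swap (a := u) ▸ h.2⟩⟩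
  loopless := ⟨fun _ h => h.1.ne rfl⟩

theorem kempeGraph_adj :
    (kempeGraph Γ ψ a b).Adj u v ↔ Γ.Adj u v ∧ ψ s(u, v) ∈ ({a, b} : Set ℕ) :=
  Iff.rfl

theorem kempeGraph_neighborSet_diff_subsingleton (hψ : IsProperEdgeColoring Γ k ψ)
    (hy : (kempeGraph Γ ψ a b).Adj u v) :
    ((kempeGraph Γ ψ a b).neighborSet u \ {v}).Subsingleton := by
  rintro x ⟨hx, hxv⟩ y ⟨hy', hyv⟩
  rw [SimpleGraph.mem_neighborSet, kempeGraph_adj] at hx hy'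
  rw [kempeGraph_adj] at hy
  by_contra hxy
  have h1 := hψ.apply_ne hx.1 hy'.1 hxy
  have h2 := hψ.apply_ne hx.1 hy.1 hxv
  have h3 := hψ.apply_ne hy'.1 hy.1 hyv
  rcases hx.2 with h | h <;> rcases hy'.2 with h' | h' <;> rcases hy.2 with h'' | h'' <;>
    simp_all

theorem kempeGraph_neighborSet_subsingleton (hψ : IsProperEdgeColoring Γ k ψ)
    (hu : a ∈ missing Γ k ψ u ∨ b ∈ missing Γ k ψ u) :
    ((kempeGraph Γ ψ a b).neighborSet u).Subsingleton := by
  intro x hx y hy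
  rw [SimpleGraph.mem_neighborSet, kempeGraph_adj] at hx hy
  by_contra hxy
  have hne := hψ.apply_ne hx.1 hy.1 hxy
  rcases hu with h | h <;> have := h.2 x hx.1 <;> have := h.2 y hy.1 <;>
    rcases hx.2 with h' | h' <;> rcases hy.2 with h'' | h'' <;> simp_all

theorem not_reachable_kempeGraph_of_reachable (hψ : IsProperEdgeColoring Γ k ψ) (huv : u ≠ v)
    (huw : u ≠ w) (hvw : v ≠ w) (hu : a ∈ missing Γ k ψ u ∨ b ∈ missing Γ k ψ u)
    (hv : a ∈ missing Γ k ψ v ∨ b ∈ missing Γ k ψ v)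
    (hw : a ∈ missing Γ k ψ w ∨ b ∈ missing Γ k ψ w)
    (h : (kempeGraph Γ ψ a b).Reachable u v) : ¬(kempeGraph Γ ψ a b).Reachable u w :=
  SimpleGraph.not_reachable_of_reachable_of_subsingleton_neighborSet
    (fun _ _ => kempeGraph_neighborSet_diff_subsingleton hψ) huv huw hvw
    (kempeGraph_neighborSet_subsingleton hψ hu) (kempeGraph_neighborSet_subsingleton hψ hv)
    (kempeGraph_neighborSet_subsingleton hψ hw) h

open Classical in
/-- Every edge touching the Kempe chain through `z` has `a` and `b` swapped; on the edges of `Γ`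
this recolors exactly the chain, since an `a`- or `b`-colored edge of `Γ` at a vertex of the chain
lies on it. -/
noncomputable def kempeSwap (Γ : SimpleGraph V) (ψ : Sym2 V → ℕ) (a b : ℕ) (z : V)
    (e : Sym2 V) : ℕ :=
  if ∃ u ∈ e, (kempeGraph Γ ψ a b).Reachable z u then Equiv.swap a b (ψ e) else ψ e

theorem kempeSwap_of_reachable (h : (kempeGraph Γ ψ a b).Reachable z u) :
    kempeSwap Γ ψ a b z s(u, x) = Equiv.swap a b (ψ s(u, x)) := by
  rw [kempeSwap, if_pos ⟨u, Sym2.mem_mk_left _ _, h⟩]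

theorem kempeSwap_of_not_reachable (hux : Γ.Adj u x) (h : ¬(kempeGraph Γ ψ a b).Reachable z u) :
    kempeSwap Γ ψ a b z s(u, x) = ψ s(u, x) := by
  rw [kempeSwap]
  split_ifs with hz
  · obtain ⟨w, hw, hzw⟩ := hz
    rcases Sym2.mem_iff.1 hw with rfl | rfl
    · exact absurd hzw h
    · have hab : ψ s(u, w) ∉ ({a, b} : Set ℕ) := fun hab =>
        h (hzw.trans (SimpleGraph.Adj.reachable (kempeGraph_adj.2 ⟨hux, hab⟩)).symm)
      simp only [Set.mem_insert_iff, Set.mem_singleton_iff, not_or] at hab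
      exact Equiv.swap_apply_of_ne_of_ne hab.1 hab.2
  · rfl

theorem kempeSwap_of_ne (hux : Γ.Adj u x) (ha : ψ s(u, x) ≠ a) (hb : ψ s(u, x) ≠ b) :
    kempeSwap Γ ψ a b z s(u, x) = ψ s(u, x) := by
  by_cases h : (kempeGraph Γ ψ a b).Reachable z u
  · rw [kempeSwap_of_reachable h, Equiv.swap_apply_of_ne_of_ne ha hb]
  · exact kempeSwap_of_not_reachable hux h

theorem swap_mem_Icc_iff (ha : a ∈ Finset.Icc 1 k) (hb : b ∈ Finset.Icc 1 k) (c : ℕ) :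
    Equiv.swap a b c ∈ Finset.Icc 1 k ↔ c ∈ Finset.Icc 1 k := by
  rw [Equiv.swap_apply_def]
  split_ifs with h h' <;> simp_all

theorem IsProperEdgeColoring.kempeSwap (hψ : IsProperEdgeColoring Γ k ψ)
    (ha : a ∈ Finset.Icc 1 k) (hb : b ∈ Finset.Icc 1 k) :
    IsProperEdgeColoring Γ k (kempeSwap Γ ψ a b z) := by
  refine .of_adj (fun u x hux => ?_) (fun w x y hx hy hxy => ?_)
  · by_cases h : (kempeGraph Γ ψ a b).Reachable z u
    · rw [kempeSwap_of_reachable h, swap_mem_Icc_iff ha hb]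
      exact hψ.1 _ hux
    · rw [kempeSwap_of_not_reachable hux h]
      exact hψ.1 _ hux
  · by_cases h : (kempeGraph Γ ψ a b).Reachable z w
    · rw [kempeSwap_of_reachable h, kempeSwap_of_reachable h]
      exact (Equiv.injective _).ne (hψ.apply_ne hx hy hxy)
    · rw [kempeSwap_of_not_reachable hx h, kempeSwap_of_not_reachable hy h]
      exact hψ.apply_ne hx hy hxy

theorem swap_mem_missing_kempeSwap_iff (ha : a ∈ Finset.Icc 1 k) (hb : b ∈ Finset.Icc 1 k)
    (h : (kempeGraph Γ ψ a b).Reachable z u) :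
    Equiv.swap a b c ∈ missing Γ k (kempeSwap Γ ψ a b z) u ↔ c ∈ missing Γ k ψ u :=
  perm_mem_missing_iff _ (swap_mem_Icc_iff ha hb) fun _ _ => kempeSwap_of_reachable h

theorem missing_kempeSwap_of_not_reachable (h : ¬(kempeGraph Γ ψ a b).Reachable z u) :
    missing Γ k (kempeSwap Γ ψ a b z) u = missing Γ k ψ u :=
  missing_congr (fun _ => Iff.rfl) fun _ hx => kempeSwap_of_not_reachable hx h

theorem left_mem_missing_kempeSwap (ha : a ∈ Finset.Icc 1 k) (hb : b ∈ Finset.Icc 1 k)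
    (h : (kempeGraph Γ ψ a b).Reachable z u) (hu : b ∈ missing Γ k ψ u) :
    a ∈ missing Γ k (kempeSwap Γ ψ a b z) u := by
  simpa only [Equiv.swap_apply_right] using (swap_mem_missing_kempeSwap_iff ha hb h).2 hu

theorem right_mem_missing_kempeSwap (ha : a ∈ Finset.Icc 1 k) (hb : b ∈ Finset.Icc 1 k)
    (h : (kempeGraph Γ ψ a b).Reachable z u) (hu : a ∈ missing Γ k ψ u) :
    b ∈ missing Γ k (kempeSwap Γ ψ a b z) u := by
  simpa only [Equiv.swap_apply_left] using (swap_mem_missing_kempeSwap_iff ha hb h).2 hu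

theorem mem_missing_kempeSwap_iff_of_ne (ha : a ∈ Finset.Icc 1 k) (hb : b ∈ Finset.Icc 1 k)
    (hca : c ≠ a) (hcb : c ≠ b) :
    c ∈ missing Γ k (kempeSwap Γ ψ a b z) u ↔ c ∈ missing Γ k ψ u := by
  by_cases h : (kempeGraph Γ ψ a b).Reachable z u
  · rw [← swap_mem_missing_kempeSwap_iff ha hb h, Equiv.swap_apply_of_ne_of_ne hca hcb]
  · rw [missing_kempeSwap_of_not_reachable h]

theorem kempeSwap_apply_mem_missing_iff (hux : Γ.Adj u x) (ha : a ∈ Finset.Icc 1 k)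
    (hb : b ∈ Finset.Icc 1 k) (hxa : ψ s(u, x) ≠ a) (hxb : ψ s(u, x) ≠ b) :
    kempeSwap Γ ψ a b z s(u, x) ∈ missing Γ k (kempeSwap Γ ψ a b z) w ↔
      ψ s(u, x) ∈ missing Γ k ψ w := by
  rw [kempeSwap_of_ne hux hxa hxb, mem_missing_kempeSwap_iff_of_ne ha hb hxa hxb]

end Kempe

section Kierstead

variable {V : Type*} [Fintype V] {G : SimpleGraph V} [DecidableRel G.Adj] {ψ : Sym2 V → ℕ}
  {y0 y1 y2 y3 : V} {a b : ℕ} {z : V}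

/-- `(y₀, y₁, y₂)` is a Kierstead path with respect to `y₀y₁` and the `Δ`-edge-coloring `ψ` of
`G - y₀y₁`. Condition K2 is recorded as `ψ(y₁y₂) ∈ ψ̄(y₀)`, its alternative `ψ(y₁y₂) ∈ ψ̄(y₁)`
being impossible. -/
structure IsKiersteadPath2 (G : SimpleGraph V) [DecidableRel G.Adj] (ψ : Sym2 V → ℕ)
    (y0 y1 y2 : V) : Prop where
  adj01 : G.Adj y0 y1
  adj12 : G.Adj y1 y2
  ne02 : y0 ≠ y2
  proper : IsProperEdgeColoring (G.deleteEdges {s(y0, y1)}) G.maxDegree ψ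
  mem_missing₀ : ψ s(y1, y2) ∈ missing (G.deleteEdges {s(y0, y1)}) G.maxDegree ψ y0

/-- Condition K3 is likewise recorded without its impossible alternative
`ψ(y₂y₃) ∈ ψ̄(y₂)`. -/
structure IsKiersteadPath3 (G : SimpleGraph V) [DecidableRel G.Adj] (ψ : Sym2 V → ℕ)
    (y0 y1 y2 y3 : V) : Prop extends IsKiersteadPath2 G ψ y0 y1 y2 where
  adj23 : G.Adj y2 y3
  ne03 : y0 ≠ y3
  ne13 : y1 ≠ y3
  mem_missing₃ : ψ s(y2, y3) ∈ missing (G.deleteEdges {s(y0, y1)}) G.maxDegree ψ y0 ∪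
    missing (G.deleteEdges {s(y0, y1)}) G.maxDegree ψ y1

local notation "M" => missing (G.deleteEdges {s(y0, y1)}) G.maxDegree

namespace IsKiersteadPath2

theorem deleteEdges_adj₁₂ (hK : IsKiersteadPath2 G ψ y0 y1 y2) :
    (G.deleteEdges {s(y0, y1)}).Adj y1 y2 :=
  SimpleGraph.deleteEdges_adj.2 ⟨hK.adj12, by simp [hK.adj01.ne', hK.ne02.symm]⟩

theorem kempeSwap (hK : IsKiersteadPath2 G ψ y0 y1 y2) (ha : a ∈ Finset.Icc 1 G.maxDegree)
    (hb : b ∈ Finset.Icc 1 G.maxDegree) (h2a : ψ s(y1, y2) ≠ a) (h2b : ψ s(y1, y2) ≠ b) :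
    IsKiersteadPath2 G (_root_.kempeSwap (G.deleteEdges {s(y0, y1)}) ψ a b z) y0 y1 y2 :=
  { hK with
    proper := hK.proper.kempeSwap ha hb
    mem_missing₀ :=
      (kempeSwap_apply_mem_missing_iff hK.deleteEdges_adj₁₂ ha hb h2a h2b).2 hK.mem_missing₀ }

theorem disjoint_missing₀₁ (hG : G.maxDegree < chromIndex G)
    (hK : IsKiersteadPath2 G ψ y0 y1 y2) : Disjoint (M ψ y0) (M ψ y1) :=
  disjoint_missing_of_lt_chromIndex hG hK.adj01 hK.proper

theorem disjoint_missing₁₂ (hG : G.maxDegree < chromIndex G)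
    (hK : IsKiersteadPath2 G ψ y0 y1 y2) : Disjoint (M ψ y1) (M ψ y2) := by
  classical
  refine Set.disjoint_left.2 fun α h1 h2 => ?_
  have hα : ψ s(y1, y2) ≠ α := fun h => apply_notMem_missing hK.deleteEdges_adj₁₂ (h ▸ h1)
  -- recoloring `y₁y₂` with `α` frees its old color at `y₁`, where it joins `y₀`
  have hψ' := hK.proper.recolor hK.deleteEdges_adj₁₂ h1 h2
  have h1' := mem_missing_update (apply_mem_missing_deleteEdges hK.proper hK.deleteEdges_adj₁₂) hα
  have h0' : ψ s(y1, y2) ∈ M (Function.update ψ s(y1, y2) α) y0 := by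
    rw [missing_update_of_notMem (by simp [hK.adj01.ne, hK.ne02])]
    exact hK.mem_missing₀
  exact Set.disjoint_left.1 (disjoint_missing_of_lt_chromIndex hG hK.adj01 hψ') h0' h1'

theorem disjoint_missing₀₂ (hG : G.maxDegree < chromIndex G)
    (hK : IsKiersteadPath2 G ψ y0 y1 y2) : Disjoint (M ψ y0) (M ψ y2) := by
  refine Set.disjoint_left.2 fun α h0 h2 => ?_
  obtain ⟨β, h1, -⟩ := exists_mem_missing_deleteEdges_notMem (ψ := ψ) hK.adj01 ∅
    (by simpa using G.degree_le_maxDegree y1)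
  have hK' := hK.kempeSwap (z := y1) h0.1 h1.1
    (fun h => apply_notMem_missing_right hK.deleteEdges_adj₁₂ (h ▸ h2))
    (fun h => apply_notMem_missing hK.deleteEdges_adj₁₂ (h ▸ h1))
  -- swapping the `α`/`β`-chain through `y₁` makes `α` missing at `y₁`, and this chain misses
  -- `y₀` or `y₂`
  have h1' := left_mem_missing_kempeSwap h0.1 h1.1 .rfl h1
  by_cases h10 : (kempeGraph (G.deleteEdges {s(y0, y1)}) ψ α β).Reachable y1 y0
  · have h12 := not_reachable_kempeGraph_of_reachable hK.proper hK.adj01.ne' hK.adj12.ne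
      hK.ne02 (.inr h1) (.inl h0) (.inl h2) h10
    rw [← missing_kempeSwap_of_not_reachable h12] at h2
    exact Set.disjoint_left.1 (hK'.disjoint_missing₁₂ hG) h1' h2
  · rw [← missing_kempeSwap_of_not_reachable h10] at h0
    exact Set.disjoint_left.1 (hK'.disjoint_missing₀₁ hG) h0 h1'

end IsKiersteadPath2

namespace IsKiersteadPath3

theorem deleteEdges_adj₂₃ (hK : IsKiersteadPath3 G ψ y0 y1 y2 y3) :
    (G.deleteEdges {s(y0, y1)}).Adj y2 y3 :=
  SimpleGraph.deleteEdges_adj.2 ⟨hK.adj23, by simp [hK.ne02.symm, hK.ne03.symm]⟩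

theorem apply₁₂_ne_apply₂₃ (hK : IsKiersteadPath3 G ψ y0 y1 y2 y3) :
    ψ s(y1, y2) ≠ ψ s(y2, y3) := by
  rw [Sym2.eq_swap]
  exact hK.proper.apply_ne hK.deleteEdges_adj₁₂.symm hK.deleteEdges_adj₂₃ hK.ne13

theorem kempeSwap (hK : IsKiersteadPath3 G ψ y0 y1 y2 y3) (ha : a ∈ Finset.Icc 1 G.maxDegree)
    (hb : b ∈ Finset.Icc 1 G.maxDegree) (h2a : ψ s(y1, y2) ≠ a) (h2b : ψ s(y1, y2) ≠ b)
    (h3a : ψ s(y2, y3) ≠ a) (h3b : ψ s(y2, y3) ≠ b) :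
    IsKiersteadPath3 G (_root_.kempeSwap (G.deleteEdges {s(y0, y1)}) ψ a b z) y0 y1 y2 y3 :=
  { hK.toIsKiersteadPath2.kempeSwap ha hb h2a h2b, hK with
    mem_missing₃ := by
      have h := fun w => kempeSwap_apply_mem_missing_iff (z := z) (w := w) hK.deleteEdges_adj₂₃ ha
        hb h3a h3b
      rw [Set.mem_union, h, h]
      exact hK.mem_missing₃ }

theorem disjoint_missing₂₃ (hG : G.maxDegree < chromIndex G)
    (hK : IsKiersteadPath3 G ψ y0 y1 y2 y3) : Disjoint (M ψ y2) (M ψ y3) := by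
  classical
  refine Set.disjoint_left.2 fun α h2 h3 => ?_
  have hα : ψ s(y2, y3) ≠ α := fun h => apply_notMem_missing_right hK.deleteEdges_adj₂₃ (h ▸ h3)
  have hy0 : y0 ∉ s(y2, y3) := by simp [hK.ne02, hK.ne03]
  have hy1 : y1 ∉ s(y2, y3) := by simp [hK.adj12.ne, hK.ne13]
  -- recoloring `y₂y₃` with `α` keeps `(y₀, y₁, y₂)` a Kierstead path and frees the old color of
  -- `y₂y₃` at `y₂`, while it is still missing at `y₀` or `y₁`
  have hK' : IsKiersteadPath2 G (Function.update ψ s(y2, y3) α) y0 y1 y2 :=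
    { hK with
      proper := hK.proper.recolor hK.deleteEdges_adj₂₃ h2 h3
      mem_missing₀ := by
        rw [missing_update_of_notMem hy0, Function.update_of_ne (by simp [hK.adj12.ne, hK.ne13])]
        exact hK.mem_missing₀ }
  have h2' := mem_missing_update (apply_mem_missing_deleteEdges hK.proper hK.deleteEdges_adj₂₃) hα
  rcases hK.mem_missing₃ with h | h
  · rw [← missing_update_of_notMem (α := α) hy0] at h
    exact Set.disjoint_left.1 (hK'.disjoint_missing₀₂ hG) h h2'
  · rw [← missing_update_of_notMem (α := α) hy1] at h
    exact Set.disjoint_left.1 (hK'.disjoint_missing₁₂ hG) h h2'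

/-- Coloring `y₀y₁` with `ψ(y₁y₂)` and uncoloring `y₁y₂` turns `(y₁, y₂, y₃)` into a Kierstead path
with respect to `y₁y₂`, provided `ψ(y₂y₃) ∈ ψ̄(y₁)`. -/
theorem exists_shift (hK : IsKiersteadPath3 G ψ y0 y1 y2 y3) (h3 : ψ s(y2, y3) ∈ M ψ y1) :
    ∃ ψ', IsKiersteadPath2 G ψ' y1 y2 y3 ∧
      M ψ y1 ⊆ missing (G.deleteEdges {s(y1, y2)}) G.maxDegree ψ' y1 ∧
      ψ s(y1, y2) ∈ missing (G.deleteEdges {s(y1, y2)}) G.maxDegree ψ' y2 ∧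
      missing (G.deleteEdges {s(y1, y2)}) G.maxDegree ψ' y3 = M ψ y3 := by
  classical
  set Γ := G.deleteEdges {s(y0, y1)}
  set Γ' := G.deleteEdges {s(y1, y2)}
  have hΓ : Γ'.deleteEdges {s(y0, y1)} = Γ.deleteEdges {s(y1, y2)} := by
    simp only [Γ, Γ', SimpleGraph.deleteEdges_deleteEdges, Set.union_comm]
  have hτ1 : ψ s(y1, y2) ∈ missing (Γ.deleteEdges {s(y1, y2)}) G.maxDegree ψ y1 :=
    apply_mem_missing_deleteEdges hK.proper hK.deleteEdges_adj₁₂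
  have hτ2 : ψ s(y1, y2) ∈ missing (Γ.deleteEdges {s(y1, y2)}) G.maxDegree ψ y2 := by
    simpa only [Sym2.eq_swap (a := y2)] using
      apply_mem_missing_deleteEdges hK.proper hK.deleteEdges_adj₁₂.symm
  have hsub (u : V) : M ψ u ⊆ missing (Γ'.deleteEdges {s(y0, y1)}) G.maxDegree ψ u := by
    rw [hΓ]
    exact missing_subset_of_le (SimpleGraph.deleteEdges_le _)
  have hy2 : y2 ∉ s(y0, y1) := by simp [hK.ne02.symm, hK.adj12.ne']
  have hy3 : y3 ∉ s(y0, y1) := by simp [hK.ne03.symm, hK.ne13.symm]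
  have h1 : M ψ y1 ⊆ missing Γ' G.maxDegree (Function.update ψ s(y0, y1) (ψ s(y1, y2))) y1 :=
    fun c hc => mem_missing_update (hsub y1 hc)
      fun h => apply_notMem_missing hK.deleteEdges_adj₁₂ (h ▸ hc)
  refine ⟨_, ⟨hK.adj12, hK.adj23, hK.ne13, ?_, ?_⟩, h1, ?_, ?_⟩
  · refine IsProperEdgeColoring.update ?_
      (SimpleGraph.deleteEdges_adj.2 ⟨hK.adj01, by simp [hK.ne02, hK.adj01.ne]⟩) ?_ ?_
    · rw [hΓ]
      exact hK.proper.mono (SimpleGraph.deleteEdges_le _)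
    · exact hsub y0 hK.mem_missing₀
    · rw [hΓ]
      exact hτ1
  · rw [Function.update_of_ne (by simp [hK.ne02.symm, hK.ne03.symm])]
    exact h1 h3
  · rw [missing_update_of_notMem hy2, ← missing_deleteEdges_of_notMem hy2, hΓ]
    exact hτ2
  · rw [missing_update_of_notMem hy3, missing_deleteEdges_of_notMem (by simp [hK.adj23.ne',
      hK.ne13.symm]), missing_deleteEdges_of_notMem hy3]

theorem disjoint_missing₁₃_of_mem_missing₁ (hG : G.maxDegree < chromIndex G)
    (hK : IsKiersteadPath3 G ψ y0 y1 y2 y3) (h3 : ψ s(y2, y3) ∈ M ψ y1) :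
    Disjoint (M ψ y1) (M ψ y3) := by
  obtain ⟨ψ', hK', h1, -, h3'⟩ := hK.exists_shift h3
  exact (hK'.disjoint_missing₀₂ hG).mono h1 h3'.ge

theorem apply₁₂_notMem_missing₃_of_mem_missing₁ (hG : G.maxDegree < chromIndex G)
    (hK : IsKiersteadPath3 G ψ y0 y1 y2 y3) (h3 : ψ s(y2, y3) ∈ M ψ y1) :
    ψ s(y1, y2) ∉ M ψ y3 := fun h => by
  obtain ⟨ψ', hK', -, h2, h3'⟩ := hK.exists_shift h3
  exact Set.disjoint_left.1 (hK'.disjoint_missing₁₂ hG) h2 (h3' ▸ h)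

theorem disjoint_missing₀₃_of_degree_lt (hG : G.maxDegree < chromIndex G)
    (hK : IsKiersteadPath3 G ψ y0 y1 y2 y3) (h2 : ψ s(y1, y2) ∉ M ψ y3)
    (hd : G.degree y2 < G.maxDegree) : Disjoint (M ψ y0) (M ψ y3) := by
  refine Set.disjoint_left.2 fun δ h0 h3 => ?_
  obtain ⟨γ, h2'⟩ := exists_mem_missing_of_degree_lt (ψ := ψ) (SimpleGraph.deleteEdges_le _) hd
  have hK' := hK.kempeSwap (z := y2) h0.1 h2'.1 (fun h => h2 (h ▸ h3))
    (fun h => apply_notMem_missing_right hK.deleteEdges_adj₁₂ (h ▸ h2'))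
    (fun h => apply_notMem_missing_right hK.deleteEdges_adj₂₃ (h ▸ h3))
    (fun h => apply_notMem_missing hK.deleteEdges_adj₂₃ (h ▸ h2'))
  have h2'' := left_mem_missing_kempeSwap h0.1 h2'.1 .rfl h2'
  by_cases h23 : (kempeGraph (G.deleteEdges {s(y0, y1)}) ψ δ γ).Reachable y2 y3
  · have h20 := not_reachable_kempeGraph_of_reachable hK.proper hK.adj23.ne hK.ne02.symm
      hK.ne03.symm (.inr h2') (.inl h3) (.inl h0) h23
    rw [← missing_kempeSwap_of_not_reachable h20] at h0
    exact Set.disjoint_left.1 (hK'.disjoint_missing₀₂ hG) h0 h2''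
  · rw [← missing_kempeSwap_of_not_reachable h23] at h3
    exact Set.disjoint_left.1 (hK'.disjoint_missing₂₃ hG) h2'' h3

theorem disjoint_missing₀₃_of_mem_missing₁ (hG : G.maxDegree < chromIndex G)
    (hK : IsKiersteadPath3 G ψ y0 y1 y2 y3) (h3 : ψ s(y2, y3) ∈ M ψ y1)
    (hmin : min (G.degree y1) (G.degree y2) < G.maxDegree) : Disjoint (M ψ y0) (M ψ y3) := by
  have h2 := hK.apply₁₂_notMem_missing₃_of_mem_missing₁ hG h3
  obtain hd | hd := min_lt_iff.1 hmin
  swap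
  · exact hK.disjoint_missing₀₃_of_degree_lt hG h2 hd
  refine Set.disjoint_left.2 fun δ h0 h3' => ?_
  obtain ⟨β, h1, hβ⟩ := exists_mem_missing_deleteEdges_notMem (ψ := ψ) (k := G.maxDegree)
    hK.adj01 {ψ s(y2, y3)} (by rw [Finset.card_singleton]; exact hd)
  have hβ : ψ s(y2, y3) ≠ β := fun h => hβ (Finset.mem_singleton.2 h.symm)
  have h3δ : ψ s(y2, y3) ≠ δ := fun h => apply_notMem_missing_right hK.deleteEdges_adj₂₃ (h ▸ h3')
  have hK' := hK.kempeSwap (z := y1) h0.1 h1.1 (fun h => h2 (h ▸ h3'))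
    (fun h => apply_notMem_missing hK.deleteEdges_adj₁₂ (h ▸ h1)) h3δ hβ
  have h1' := left_mem_missing_kempeSwap h0.1 h1.1 .rfl h1
  by_cases h10 : (kempeGraph (G.deleteEdges {s(y0, y1)}) ψ δ β).Reachable y1 y0
  · have h13 := not_reachable_kempeGraph_of_reachable hK.proper hK.adj01.ne' hK.ne13 hK.ne03
      (.inr h1) (.inl h0) (.inl h3') h10
    rw [← missing_kempeSwap_of_not_reachable h13] at h3'
    have h3'' := (kempeSwap_apply_mem_missing_iff (z := y1) hK.deleteEdges_adj₂₃ h0.1 h1.1 h3δ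
      hβ).2 h3
    exact Set.disjoint_left.1 (hK'.disjoint_missing₁₃_of_mem_missing₁ hG h3'') h1' h3'
  · rw [← missing_kempeSwap_of_not_reachable h10] at h0
    exact Set.disjoint_left.1 (hK'.disjoint_missing₀₁ hG) h0 h1'

theorem disjoint_missing₁₃ (hG : G.maxDegree < chromIndex G)
    (hK : IsKiersteadPath3 G ψ y0 y1 y2 y3)
    (hmin : min (G.degree y1) (G.degree y2) < G.maxDegree) : Disjoint (M ψ y1) (M ψ y3) := by
  obtain h3 | h3 := hK.mem_missing₃
  swap
  · exact hK.disjoint_missing₁₃_of_mem_missing₁ hG h3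
  refine Set.disjoint_left.2 fun α h1 h3' => ?_
  have h1' := right_mem_missing_kempeSwap (z := y1) h1.1 h3.1 .rfl h1
  by_cases h10 : (kempeGraph (G.deleteEdges {s(y0, y1)}) ψ α (ψ s(y2, y3))).Reachable y1 y0
  · have h13 := not_reachable_kempeGraph_of_reachable hK.proper hK.adj01.ne' hK.ne13 hK.ne03
      (.inl h1) (.inr h3) (.inl h3') h10
    -- the chain through `y₁` and `y₀` avoids `y₃`, so `y₂y₃` keeps its color, now missing at `y₁`
    have h23 : _root_.kempeSwap (G.deleteEdges {s(y0, y1)}) ψ α (ψ s(y2, y3)) y1 s(y2, y3) =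
        ψ s(y2, y3) := by
      simpa only [Sym2.eq_swap (a := y3)] using
        kempeSwap_of_not_reachable hK.deleteEdges_adj₂₃.symm h13
    have h3'' : _root_.kempeSwap (G.deleteEdges {s(y0, y1)}) ψ α (ψ s(y2, y3)) y1 s(y2, y3) ∈
        M (_root_.kempeSwap (G.deleteEdges {s(y0, y1)}) ψ α (ψ s(y2, y3)) y1) y1 := by
      rw [h23]
      exact h1'
    have hK' : IsKiersteadPath3 G (_root_.kempeSwap _ ψ α (ψ s(y2, y3)) y1) y0 y1 y2 y3 :=
      { hK.toIsKiersteadPath2.kempeSwap h1.1 h3.1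
          (fun h => apply_notMem_missing hK.deleteEdges_adj₁₂ (h ▸ h1)) hK.apply₁₂_ne_apply₂₃,
        hK with
        mem_missing₃ := .inr h3'' }
    have h0' := left_mem_missing_kempeSwap h1.1 h3.1 h10 h3
    rw [← missing_kempeSwap_of_not_reachable h13] at h3'
    exact Set.disjoint_left.1 (hK'.disjoint_missing₀₃_of_mem_missing₁ hG h3'' hmin) h0' h3'
  · rw [← missing_kempeSwap_of_not_reachable h10] at h3
    exact Set.disjoint_left.1 (disjoint_missing_of_lt_chromIndex hG hK.adj01
      (hK.proper.kempeSwap h1.1 h3.1)) h3 h1'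

theorem disjoint_missing₀₃ (hG : G.maxDegree < chromIndex G)
    (hK : IsKiersteadPath3 G ψ y0 y1 y2 y3)
    (hmin : min (G.degree y1) (G.degree y2) < G.maxDegree) : Disjoint (M ψ y0) (M ψ y3) := by
  obtain h3 | h3 := hK.mem_missing₃
  swap
  · exact hK.disjoint_missing₀₃_of_mem_missing₁ hG h3 hmin
  refine Set.disjoint_left.2 fun α h0 h3' => ?_
  obtain ⟨β, h1, -⟩ := exists_mem_missing_deleteEdges_notMem (ψ := ψ) hK.adj01 ∅
    (by simpa using G.degree_le_maxDegree y1)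
  have h1' := left_mem_missing_kempeSwap (z := y1) h0.1 h1.1 .rfl h1
  by_cases h10 : (kempeGraph (G.deleteEdges {s(y0, y1)}) ψ α β).Reachable y1 y0
  · have h13 := not_reachable_kempeGraph_of_reachable hK.proper hK.adj01.ne' hK.ne13 hK.ne03
      (.inr h1) (.inl h0) (.inl h3') h10
    -- `y₀` and `y₁` lie on the swapped chain, so `ψ(y₁y₂)` and `ψ̄(y₀)` are swapped together
    have hK' : IsKiersteadPath3 G (_root_.kempeSwap _ ψ α β y1) y0 y1 y2 y3 :=
      { hK with
        proper := hK.proper.kempeSwap h0.1 h1.1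
        mem_missing₀ := by
          rw [kempeSwap_of_reachable .rfl, swap_mem_missing_kempeSwap_iff h0.1 h1.1 h10]
          exact hK.mem_missing₀
        mem_missing₃ := .inl <| (kempeSwap_apply_mem_missing_iff hK.deleteEdges_adj₂₃ h0.1 h1.1
          (fun h => apply_notMem_missing_right hK.deleteEdges_adj₂₃ (h ▸ h3'))
          (fun h => Set.disjoint_left.1 (hK.disjoint_missing₀₁ hG) h3 (by rwa [h]))).2 h3 }
    rw [← missing_kempeSwap_of_not_reachable h13] at h3'
    exact Set.disjoint_left.1 (hK'.disjoint_missing₁₃ hG hmin) h1' h3'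
  · rw [← missing_kempeSwap_of_not_reachable h10] at h0
    exact Set.disjoint_left.1 (disjoint_missing_of_lt_chromIndex hG hK.adj01
      (hK.proper.kempeSwap h0.1 h1.1)) h0 h1'

theorem pairwiseDisjoint_missing (hG : G.maxDegree < chromIndex G)
    (hK : IsKiersteadPath3 G ψ y0 y1 y2 y3)
    (hmin : min (G.degree y1) (G.degree y2) < G.maxDegree) :
    ({y0, y1, y2, y3} : Set V).PairwiseDisjoint (M ψ) := by
  simp only [Set.pairwiseDisjoint_insert, Set.pairwiseDisjoint_singleton, Set.mem_insert_iff,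
    Set.mem_singleton_iff, forall_eq_or_imp, forall_eq, true_and]
  exact ⟨⟨fun _ => hK.disjoint_missing₂₃ hG, fun _ => hK.disjoint_missing₁₂ hG,
    fun _ => hK.disjoint_missing₁₃ hG hmin⟩, fun _ => hK.disjoint_missing₀₁ hG,
    fun _ => hK.disjoint_missing₀₂ hG, fun _ => hK.disjoint_missing₀₃ hG hmin⟩

end IsKiersteadPath3

end Kierstead

theorem kierstead_path_elementary_general {V : Type*} [Fintype V]
    (G : SimpleGraph V) [DecidableRel G.Adj]
    (hClass2 : chromIndex G = G.maxDegree + 1)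
    (y0 y1 y2 y3 : V)
    (hdist : ([y0, y1, y2, y3] : List V).Pairwise (· ≠ ·))
    (h01 : G.Adj y0 y1) (h12 : G.Adj y1 y2) (h23 : G.Adj y2 y3)
    (φ : Sym2 V → ℕ)
    (hφ : IsProperEdgeColoring (G.deleteEdges {s(y0, y1)}) G.maxDegree φ)
    -- the Kierstead path condition K2
    (hK2 : φ s(y1, y2) ∈ missing (G.deleteEdges {s(y0, y1)}) G.maxDegree φ y0 ∪
      missing (G.deleteEdges {s(y0, y1)}) G.maxDegree φ y1)
    (hK3 : φ s(y2, y3) ∈ missing (G.deleteEdges {s(y0, y1)}) G.maxDegree φ y0 ∪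
      missing (G.deleteEdges {s(y0, y1)}) G.maxDegree φ y1 ∪
      missing (G.deleteEdges {s(y0, y1)}) G.maxDegree φ y2)
    (hmin : min (G.degree y1) (G.degree y2) < G.maxDegree) :
    ∀ u ∈ ({y0, y1, y2, y3} : Set V), ∀ v ∈ ({y0, y1, y2, y3} : Set V), u ≠ v →
      missing (G.deleteEdges {s(y0, y1)}) G.maxDegree φ u ∩
        missing (G.deleteEdges {s(y0, y1)}) G.maxDegree φ v = ∅ := by
  have hG : G.maxDegree < chromIndex G := hClass2 ▸ Nat.lt_succ_self _
  have ne02 : y0 ≠ y2 := List.rel_of_pairwise_cons hdist (by simp)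
  have ne03 : y0 ≠ y3 := List.rel_of_pairwise_cons hdist (by simp)
  have ne13 : y1 ≠ y3 := List.rel_of_pairwise_cons hdist.of_cons (by simp)
  have hK : IsKiersteadPath3 G φ y0 y1 y2 y3 :=
    { adj01 := h01, adj12 := h12, adj23 := h23, ne02, ne03, ne13, proper := hφ
      mem_missing₀ := hK2.resolve_right <| apply_notMem_missing <|
        SimpleGraph.deleteEdges_adj.2 ⟨h12, by simp [h01.ne', ne02.symm]⟩
      mem_missing₃ := hK3.resolve_right <| apply_notMem_missing <|
        SimpleGraph.deleteEdges_adj.2 ⟨h23, by simp [ne02.symm, ne03.symm]⟩ }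
  intro u hu v hv huv
  exact Set.disjoint_iff_inter_eq_empty.1 (hK.pairwiseDisjoint_missing hG hmin hu hv huv)

/-- If `G` is Class 2 with critical edge `e₁ = y₀y₁`, `φ ∈ C^Δ(G - e₁)`,
and `K = (y₀, e₁, y₁, e₂, y₂, e₃, y₃)` is a Kierstead path with respect to `e₁` and `φ`
with `min {d_G(y₁), d_G(y₂)} < Δ`, then `{y₀, y₁, y₂, y₃}` is `φ`-elementary. -/
theorem kierstead_path_elementary {V : Type*} [Fintype V] [DecidableEq V]
    (G : SimpleGraph V) [DecidableRel G.Adj]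
    (hClass2 : chromIndex G = G.maxDegree + 1)
    (y0 y1 y2 y3 : V)
    (hdist : ([y0, y1, y2, y3] : List V).Pairwise (· ≠ ·))
    (h01 : G.Adj y0 y1) (h12 : G.Adj y1 y2) (h23 : G.Adj y2 y3)
    (hcritical : chromIndex (G.deleteEdges {s(y0, y1)}) < chromIndex G)
    (φ : Sym2 V → ℕ)
    (hφ : IsProperEdgeColoring (G.deleteEdges {s(y0, y1)}) G.maxDegree φ)
    -- the Kierstead path condition K2
    (hK2 : φ s(y1, y2) ∈ missing (G.deleteEdges {s(y0, y1)}) G.maxDegree φ y0 ∪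
      missing (G.deleteEdges {s(y0, y1)}) G.maxDegree φ y1)
    (hK3 : φ s(y2, y3) ∈ missing (G.deleteEdges {s(y0, y1)}) G.maxDegree φ y0 ∪
      missing (G.deleteEdges {s(y0, y1)}) G.maxDegree φ y1 ∪
      missing (G.deleteEdges {s(y0, y1)}) G.maxDegree φ y2)
    (hmin : min (G.degree y1) (G.degree y2) < G.maxDegree) :
    ∀ u ∈ ({y0, y1, y2, y3} : Set V), ∀ v ∈ ({y0, y1, y2, y3} : Set V), u ≠ v →
      missing (G.deleteEdges {s(y0, y1)}) G.maxDegree φ u ∩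
        missing (G.deleteEdges {s(y0, y1)}) G.maxDegree φ v = ∅ :=
  kierstead_path_elementary_general G hClass2 y0 y1 y2 y3 hdist h01 h12 h23 φ hφ hK2 hK3 hmin
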